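/- There exists a P-solvable MAPF instance such that the minimum makespan over all solutions is strictly smaller than the makespan of every solution that is consistent with some priority ordering; i.e., prioritized planning is suboptimal for the makespan objective in general on the class of P-solvable MAPF instances, no matter which priority ordering is used. -/

import Mathlib

/-!
The instance is a 7-cycle `1 – 2 – ⋯ – 7 – 1` with a pendant vertex `0` at `1`; agent `0` travels
`0 → 2` and agent `1` travels `3 → 1`. Both targets are at distance 2, and the two shortest routes
cross the edge `1 – 2` in opposite directions; going round the cycle instead costs agent `1`
five steps. In a prioritized plan some agent has no agent of higher priority, so it arrives at
time 2 and then blocks its target, and an exhaustive check over the finitely many short paths of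
the other agent shows that this one cannot arrive before time 5. Without priorities, agent `0`
waits two steps at `0` while agent `1` passes through `1` and steps aside into `7`, which gives
makespan 4.
-/

/-- Two (space-time) paths have a vertex collision: same vertex at the same time. -/
def VCol {V : Type} (π σ : ℕ → V) : Prop := ∃ t, π t = σ t

/-- Two (space-time) paths have an edge collision: they traverse the same edge in
opposite directions at the same time. -/
def ECol {V : Type} (π σ : ℕ → V) : Prop := ∃ t, π t = σ (t + 1) ∧ π (t + 1) = σ t

/-- Two paths collide if they have a vertex collision or an edge collision. -/
def Collide {V : Type} (π σ : ℕ → V) : Prop := VCol π σ ∨ ECol π σ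

/-- `π : ℕ → V` is a path from `s` to `t` in `G`: it starts at `s`, at each time step
it stays put or moves along an edge of `G`, and it is eventually always at `t`. -/
def IsPathFun {V : Type} (G : SimpleGraph V) (s t : V) (π : ℕ → V) : Prop :=
  π 0 = s ∧ (∀ n, π (n + 1) = π n ∨ G.Adj (π n) (π (n + 1))) ∧ ∃ T, ∀ n ≥ T, π n = t

/-- The arrival time of a path at a target vertex `tgt`: the least time `T` such that
the path is at `tgt` at all times `≥ T`. -/
noncomputable def arrivalTime {V : Type} (tgt : V) (π : ℕ → V) : ℕ :=
  sInf {T | ∀ n ≥ T, π n = tgt}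

/-- A MAPF instance: a connected undirected graph and `M` agents with pairwise distinct
start vertices and pairwise distinct target vertices. -/
structure MAPF where
  V : Type
  G : SimpleGraph V
  conn : G.Connected
  M : ℕ
  s : Fin M → V
  t : Fin M → V
  s_inj : Function.Injective s
  t_inj : Function.Injective t

/-- `π` is a path for agent `i` of the MAPF instance `P`. -/
def MAPF.IsPath (P : MAPF) (i : Fin P.M) (π : ℕ → P.V) : Prop :=
  IsPathFun P.G (P.s i) (P.t i) π

/-- The arrival time of agent `i`'s path `π`. -/
noncomputable def MAPF.arr (P : MAPF) (i : Fin P.M) (π : ℕ → P.V) : ℕ :=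
  arrivalTime (P.t i) π

/-- A solution: a path for each agent such that no two paths collide. -/
def MAPF.Solution (P : MAPF) (π : Fin P.M → ℕ → P.V) : Prop :=
  (∀ i, P.IsPath i (π i)) ∧ ∀ i j, i ≠ j → ¬ Collide (π i) (π j)

/-- A priority ordering: a strict partial order (irreflexive and transitive relation)
on the agents. -/
def IsPO {M : ℕ} (r : Fin M → Fin M → Prop) : Prop :=
  (∀ i, ¬ r i i) ∧ ∀ i j k, r i j → r j k → r i k

/-- A total priority ordering: a strict total order on the agents. -/
def IsTotalPO {M : ℕ} (r : Fin M → Fin M → Prop) : Prop :=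
  IsPO r ∧ ∀ i j : Fin M, i ≠ j → r i j ∨ r j i

/-- A plan `π` is consistent with a priority ordering `r`: for every agent `i`, the
arrival time of `π i` is the minimum arrival time over all paths for agent `i` that
have no collision with `π j` for every higher-priority agent `j` (`r j i`). -/
def MAPF.Consistent (P : MAPF) (π : Fin P.M → ℕ → P.V)
    (r : Fin P.M → Fin P.M → Prop) : Prop :=
  ∀ i, IsLeast {T | ∃ σ, P.IsPath i σ ∧ (∀ j, r j i → ¬ Collide σ (π j)) ∧ P.arr i σ = T}
    (P.arr i (π i))

/-- A MAPF instance is P-solvable if it admits a solution consistent with some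
priority ordering. -/
def MAPF.PSolvable (P : MAPF) : Prop :=
  ∃ π r, IsPO r ∧ P.Solution π ∧ P.Consistent π r

/-- The flowtime of a plan: the sum of the arrival times of all agents. -/
noncomputable def MAPF.flowtime (P : MAPF) (π : Fin P.M → ℕ → P.V) : ℕ :=
  ∑ i, P.arr i (π i)

/-- The makespan of a plan: the maximum of the arrival times of all agents. -/
noncomputable def MAPF.makespan (P : MAPF) (π : Fin P.M → ℕ → P.V) : ℕ :=
  Finset.univ.sup fun i => P.arr i (π i)

/-- A MAPF instance is well-formed if every agent has a (finite) walk from its start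
vertex to its target vertex that visits neither the start vertex nor the target vertex
of any other agent. -/
def MAPF.WellFormed (P : MAPF) : Prop :=
  ∀ i, ∃ w : P.G.Walk (P.s i) (P.t i),
    ∀ j, j ≠ i → P.s j ∉ w.support ∧ P.t j ∉ w.support

theorem Collide.symm {V : Type} {π σ : ℕ → V} : Collide π σ → Collide σ π
  | .inl ⟨t, h⟩ => .inl ⟨t, h.symm⟩
  | .inr ⟨t, h₁, h₂⟩ => .inr ⟨t, h₂.symm, h₁.symm⟩

section Paths

variable {V : Type} {G : SimpleGraph V} {s tgt : V} {π : ℕ → V}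

theorem arrivalTime_le_iff (h : ∃ T, ∀ n ≥ T, π n = tgt) {a : ℕ} :
    arrivalTime tgt π ≤ a ↔ ∀ n ≥ a, π n = tgt :=
  ⟨fun ha n hn => Nat.sInf_mem h n (ha.trans hn), fun ha => Nat.sInf_le ha⟩

theorem IsPathFun.exists_walk (hπ : IsPathFun G s tgt π) :
    ∀ n, ∃ w : G.Walk s (π n), w.length ≤ n
  | 0 => ⟨SimpleGraph.Walk.nil.copy rfl hπ.1.symm, by simp⟩
  | n + 1 => by
    obtain ⟨w, hw⟩ := hπ.exists_walk n
    rcases hπ.2.1 n with hstay | hadj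
    · exact ⟨w.copy rfl hstay.symm, by simpa using hw.trans n.le_succ⟩
    · exact ⟨w.concat hadj, by simpa using hw⟩

theorem IsPathFun.dist_le_arrivalTime (hπ : IsPathFun G s tgt π) :
    G.dist s tgt ≤ arrivalTime tgt π := by
  obtain ⟨w, hw⟩ := hπ.exists_walk (arrivalTime tgt π)
  have hsettled := (arrivalTime_le_iff hπ.2.2).1 le_rfl _ le_rfl
  exact (SimpleGraph.dist_le (w.copy rfl hsettled)).trans (by simpa using hw)

def listPath (l : List V) (d : V) : ℕ → V := fun n => l.getD n d

theorem listPath_of_length_le {l : List V} {d : V} {n : ℕ} (hn : l.length ≤ n) :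
    listPath l d n = d :=
  List.getD_eq_default _ _ hn

theorem isPathFun_listPath {l : List V} (hs : listPath l tgt 0 = s)
    (hstep : ∀ n < l.length, listPath l tgt (n + 1) = listPath l tgt n ∨
      G.Adj (listPath l tgt n) (listPath l tgt (n + 1))) :
    IsPathFun G s tgt (listPath l tgt) := by
  refine ⟨hs, fun n => ?_, l.length, fun n => listPath_of_length_le⟩
  rcases lt_or_ge n l.length with hn | hn
  · exact hstep n hn
  · exact .inl ((listPath_of_length_le (hn.trans n.le_succ)).trans (listPath_of_length_le hn).symm)

theorem arrivalTime_listPath_le (l : List V) (d : V) : arrivalTime d (listPath l d) ≤ l.length :=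
  Nat.sInf_le fun _ => listPath_of_length_le

end Paths

section Collisions

variable {V : Type}

def CollideBefore (m : ℕ) (π σ : ℕ → V) : Prop :=
  (∃ t < m + 1, π t = σ t) ∨ ∃ t < m, π t = σ (t + 1) ∧ π (t + 1) = σ t

instance [DecidableEq V] (m : ℕ) (π σ : ℕ → V) : Decidable (CollideBefore m π σ) :=
  inferInstanceAs (Decidable (_ ∨ _))

theorem CollideBefore.collide {m : ℕ} {π σ : ℕ → V} : CollideBefore m π σ → Collide π σ
  | .inl ⟨t, _, h⟩ => .inl ⟨t, h⟩
  | .inr ⟨t, _, h⟩ => .inr ⟨t, h⟩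

theorem CollideBefore.congr {m : ℕ} {π σ π' σ' : ℕ → V} (hπ : ∀ t ≤ m, π t = π' t)
    (hσ : ∀ t ≤ m, σ t = σ' t) : CollideBefore m π σ → CollideBefore m π' σ'
  | .inl ⟨t, ht, h⟩ => .inl ⟨t, ht, by rwa [← hπ t (by omega), ← hσ t (by omega)]⟩
  | .inr ⟨t, ht, h₁, h₂⟩ =>
    .inr ⟨t, ht, by rwa [← hπ t (by omega), ← hσ (t + 1) (by omega)],
      by rwa [← hπ (t + 1) (by omega), ← hσ t (by omega)]⟩

theorem not_collide_of_not_collideBefore {m : ℕ} {π σ : ℕ → V} {a b : V}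
    (hab : a ≠ b) (hπ : ∀ n ≥ m, π n = a) (hσ : ∀ n ≥ m, σ n = b) (h : ¬ CollideBefore m π σ) :
    ¬ Collide π σ
  | .inl ⟨t, ht⟩ => by
    by_cases htm : t < m + 1
    · exact h (.inl ⟨t, htm, ht⟩)
    · exact hab (by rw [← hπ t (by omega), ← hσ t (by omega), ht])
  | .inr ⟨t, ht₁, ht₂⟩ => by
    by_cases htm : t < m
    · exact h (.inr ⟨t, htm, ht₁, ht₂⟩)
    · exact hab (by rw [← hπ t (by omega), ← hσ (t + 1) (by omega), ht₁])

theorem not_collide_listPath {l l' : List V} {a b : V} {m : ℕ}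
    (hab : a ≠ b) (hl : l.length ≤ m) (hl' : l'.length ≤ m)
    (h : ¬ CollideBefore m (listPath l a) (listPath l' b)) :
    ¬ Collide (listPath l a) (listPath l' b) :=
  not_collide_of_not_collideBefore hab (fun _ hn => listPath_of_length_le (hl.trans hn))
    (fun _ hn => listPath_of_length_le (hl'.trans hn)) h

end Collisions

section Prefixes

variable {V : Type}

def window (π : ℕ → V) (m : ℕ) : List V := (List.range (m + 1)).map π

theorem window_succ (π : ℕ → V) (m : ℕ) : window π (m + 1) = window π m ++ [π (m + 1)] := by
  simp only [window, List.range_succ, List.map_append, List.map_singleton]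

theorem getLastD_window (π : ℕ → V) (d : V) : ∀ m, (window π m).getLastD d = π m
  | 0 => rfl
  | m + 1 => by rw [window_succ, List.getLastD_concat]

theorem listPath_window (π : ℕ → V) (d : V) {m t : ℕ} (ht : t ≤ m) :
    listPath (window π m) d t = π t := by
  simp [listPath, window, List.getD_eq_getElem?_getD, List.getElem?_range (Nat.lt_succ_of_le ht)]

/-- Candidates for `window π m` over all paths `π` from `s` that are at `tgt` from time `a` on,
when `step v` lists every vertex that can follow `v`. -/
def pathPrefixes [DecidableEq V] (step : V → List V) (s tgt : V) (a : ℕ) : ℕ → List (List V)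
  | 0 => [[s]]
  | m + 1 => (pathPrefixes step s tgt a m).flatMap fun p =>
      ((step (p.getLastD s)).filter fun w => a ≤ m + 1 → w = tgt).map (p ++ [·])

theorem window_mem_pathPrefixes [DecidableEq V] {G : SimpleGraph V} {step : V → List V}
    (hstep : ∀ v w, w = v ∨ G.Adj v w → w ∈ step v) {s tgt : V} {a : ℕ} {π : ℕ → V}
    (hπ : IsPathFun G s tgt π) (ha : ∀ n ≥ a, π n = tgt) :
    ∀ m, window π m ∈ pathPrefixes step s tgt a m
  | 0 => by simp [window, pathPrefixes, hπ.1]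
  | m + 1 => by
    refine List.mem_flatMap.2 ⟨_, window_mem_pathPrefixes hstep hπ ha m, ?_⟩
    rw [window_succ, getLastD_window]
    refine List.mem_map_of_mem (List.mem_filter.2 ⟨hstep _ _ (hπ.2.1 m), ?_⟩)
    exact decide_eq_true (ha (m + 1))

theorem collide_of_forall_pathPrefixes [DecidableEq V] {G : SimpleGraph V} {step : V → List V}
    (hstep : ∀ v w, w = v ∨ G.Adj v w → w ∈ step v) {s s' tgt tgt' : V} {a a' m : ℕ}
    (hcheck : ∀ p ∈ pathPrefixes step s tgt a m, ∀ q ∈ pathPrefixes step s' tgt' a' m,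
      CollideBefore m (listPath p tgt) (listPath q tgt'))
    {π σ : ℕ → V} (hπ : IsPathFun G s tgt π) (hπa : arrivalTime tgt π ≤ a)
    (hσ : IsPathFun G s' tgt' σ) (hσa : arrivalTime tgt' σ ≤ a') : Collide π σ :=
  ((hcheck _ (window_mem_pathPrefixes hstep hπ ((arrivalTime_le_iff hπ.2.2).1 hπa) m)
    _ (window_mem_pathPrefixes hstep hσ ((arrivalTime_le_iff hσ.2.2).1 hσa) m)).congr
    (fun _ => listPath_window π tgt) (fun _ => listPath_window σ tgt')).collide

end Prefixes

theorem IsPO.exists_forall_not_rel {M : ℕ} [NeZero M] {r : Fin M → Fin M → Prop} (hr : IsPO r) :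
    ∃ i, ∀ j, ¬ r j i := by
  have : IsTrans (Fin M) r := ⟨hr.2⟩
  have : Std.Irrefl r := ⟨hr.1⟩
  obtain ⟨i, -, hi⟩ := (Finite.wellFounded_of_trans_of_irrefl r).has_min Set.univ Set.univ_nonempty
  exact ⟨i, fun j => hi j trivial⟩

theorem MAPF.Consistent.arr_le {P : MAPF} {π : Fin P.M → ℕ → P.V} {r : Fin P.M → Fin P.M → Prop}
    (h : P.Consistent π r) {i : Fin P.M} (hi : ∀ j, ¬ r j i) {σ : ℕ → P.V} (hσ : P.IsPath i σ) :
    P.arr i (π i) ≤ P.arr i σ :=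
  (h i).2 ⟨σ, hσ, fun j hj => absurd hj (hi j), rfl⟩

theorem MAPF.arr_le_makespan (P : MAPF) (π : Fin P.M → ℕ → P.V) (i : Fin P.M) :
    P.arr i (π i) ≤ P.makespan π :=
  Finset.le_sup (f := fun i => P.arr i (π i)) (Finset.mem_univ i)

def swapGraph : SimpleGraph (Fin 8) :=
  SimpleGraph.fromRel fun u v => u.val + 1 = v.val ∨ (u = 1 ∧ v = 7)

instance : DecidableRel swapGraph.Adj := fun u v =>
  inferInstanceAs (Decidable ((SimpleGraph.fromRel _).Adj u v))

theorem swapGraph_connected : swapGraph.Connected :=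
  (SimpleGraph.pathGraph_connected 7).mono fun u v huv => by
    rw [SimpleGraph.pathGraph_adj] at huv
    rw [swapGraph, SimpleGraph.fromRel_adj]
    omega

abbrev swapInstance : MAPF where
  V := Fin 8
  G := swapGraph
  conn := swapGraph_connected
  M := 2
  s := ![0, 3]
  t := ![2, 1]
  s_inj := by decide
  t_inj := by decide

namespace swapInstance

def step (v : Fin 8) : List (Fin 8) :=
  (List.finRange 8).filter fun w => w = v ∨ swapGraph.Adj v w

theorem mem_step {v w : Fin 8} (h : w = v ∨ swapGraph.Adj v w) : w ∈ step v :=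
  List.mem_filter.2 ⟨List.mem_finRange w, decide_eq_true h⟩

theorem five_le_arr_of_not_collide {σ₀ σ₁ : ℕ → Fin 8} (h₀ : swapInstance.IsPath 0 σ₀)
    (h₁ : swapInstance.IsPath 1 σ₁) (h : ¬ Collide σ₀ σ₁) :
    (swapInstance.arr 0 σ₀ ≤ 2 → 5 ≤ swapInstance.arr 1 σ₁) ∧
      (swapInstance.arr 1 σ₁ ≤ 2 → 5 ≤ swapInstance.arr 0 σ₀) := by
  refine ⟨fun hfast => ?_, fun hfast => ?_⟩ <;> refine le_of_not_gt fun hlt => h ?_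
  · exact collide_of_forall_pathPrefixes (m := 5) (fun _ _ => mem_step) (by decide)
      h₀ hfast h₁ (Nat.le_of_lt_succ hlt)
  · exact collide_of_forall_pathPrefixes (m := 5) (fun _ _ => mem_step) (by decide)
      h₀ (Nat.le_of_lt_succ hlt) h₁ hfast

theorem two_le_arr {i : Fin swapInstance.M} {σ : ℕ → swapInstance.V}
    (hσ : swapInstance.IsPath i σ) :
    2 ≤ swapInstance.arr i σ := by
  have hdist : 2 ≤ swapGraph.dist (swapInstance.s i) (swapInstance.t i) := by
    fin_cases i <;> exact swapGraph_connected.one_lt_dist_of_ne_of_not_adj (by decide) (by decide)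
  exact hdist.trans hσ.dist_le_arrivalTime

theorem solution_of_not_collide {π : Fin swapInstance.M → ℕ → swapInstance.V}
    (hπ : ∀ i, swapInstance.IsPath i (π i)) (h : ¬ Collide (π 0) (π 1)) :
    swapInstance.Solution π := by
  refine ⟨hπ, fun i j hij => ?_⟩
  fin_cases i <;> fin_cases j
  exacts [absurd rfl hij, h, fun h' => h h'.symm, absurd rfl hij]

def directPath : Fin swapInstance.M → ℕ → swapInstance.V :=
  ![listPath [0, 1] 2, listPath [3, 2] 1]

theorem isPath_directPath (i : Fin swapInstance.M) : swapInstance.IsPath i (directPath i) := by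
  fin_cases i <;> exact isPathFun_listPath (by decide) (by decide)

theorem arr_directPath_le (i : Fin swapInstance.M) : swapInstance.arr i (directPath i) ≤ 2 := by
  fin_cases i <;> exact arrivalTime_listPath_le _ _

def prioritizedPlan : Fin swapInstance.M → ℕ → swapInstance.V :=
  ![directPath 0, listPath [3, 4, 5, 6, 7] 1]

def agent0First : Fin swapInstance.M → Fin swapInstance.M → Prop := fun i j => i = 0 ∧ j = 1

theorem isPO_agent0First : IsPO agent0First :=
  ⟨fun _ ⟨h₀, h₁⟩ => absurd (h₀.symm.trans h₁) (by decide),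
    fun _ _ _ ⟨hi, _⟩ ⟨_, hk⟩ => ⟨hi, hk⟩⟩

theorem isPath_prioritizedPlan (i : Fin swapInstance.M) :
    swapInstance.IsPath i (prioritizedPlan i) := by
  fin_cases i
  exacts [isPath_directPath 0, isPathFun_listPath (by decide) (by decide)]

theorem not_collide_prioritizedPlan : ¬ Collide (prioritizedPlan 0) (prioritizedPlan 1) :=
  not_collide_listPath (m := 5) (by decide) (by decide) (by decide) (by decide)

theorem consistent_prioritizedPlan : swapInstance.Consistent prioritizedPlan agent0First := by
  intro i
  fin_cases i
  · refine ⟨⟨_, isPath_prioritizedPlan 0, fun j hj => absurd hj.2 (by decide), rfl⟩, ?_⟩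
    rintro _ ⟨σ, hσ, -, rfl⟩
    exact (arr_directPath_le 0).trans (two_le_arr hσ)
  · refine ⟨⟨_, isPath_prioritizedPlan 1, ?_, rfl⟩, ?_⟩
    · rintro j ⟨rfl, -⟩ h
      exact not_collide_prioritizedPlan h.symm
    · rintro _ ⟨σ, hσ, hfree, rfl⟩
      have hslow := (five_le_arr_of_not_collide (isPath_directPath 0) hσ
        fun h => hfree 0 ⟨rfl, rfl⟩ h.symm).1 (arr_directPath_le 0)
      exact (arrivalTime_listPath_le _ _).trans hslow

def sidestepPlan : Fin swapInstance.M → ℕ → swapInstance.V :=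
  ![listPath [0, 0, 0, 1] 2, listPath [3, 2, 1, 7] 1]

theorem solution_sidestepPlan : swapInstance.Solution sidestepPlan := by
  refine solution_of_not_collide (fun i => ?_) ?_
  · fin_cases i <;> exact isPathFun_listPath (by decide) (by decide)
  · exact not_collide_listPath (m := 4) (by decide) (by decide) (by decide) (by decide)

theorem makespan_sidestepPlan_le : swapInstance.makespan sidestepPlan ≤ 4 :=
  Finset.sup_le fun i _ => by fin_cases i <;> exact arrivalTime_listPath_le _ _

end swapInstance

open swapInstance in
/-- Prioritized planning is suboptimal for the makespan objective on P-solvable MAPF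
instances: there is a P-solvable instance with a solution whose makespan is strictly
smaller than the makespan of every solution consistent with any priority ordering. -/
theorem stmt9 :
    ∃ P : MAPF, P.PSolvable ∧ ∃ πopt, P.Solution πopt ∧
      ∀ (π : Fin P.M → ℕ → P.V) (r : Fin P.M → Fin P.M → Prop),
        IsPO r → P.Solution π → P.Consistent π r →
          P.makespan πopt < P.makespan π := by
  refine ⟨swapInstance, ⟨prioritizedPlan, agent0First, isPO_agent0First,
    solution_of_not_collide isPath_prioritizedPlan not_collide_prioritizedPlan,
    consistent_prioritizedPlan⟩, sidestepPlan, solution_sidestepPlan, fun π r hr hπ hcons => ?_⟩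
  obtain ⟨i, hi⟩ := hr.exists_forall_not_rel
  have hfast : swapInstance.arr i (π i) ≤ 2 :=
    (hcons.arr_le hi (isPath_directPath i)).trans (arr_directPath_le i)
  have hslow := five_le_arr_of_not_collide (hπ.1 0) (hπ.1 1) (hπ.2 0 1 (by decide))
  have hother : ∃ j, 5 ≤ swapInstance.arr j (π j) := by
    fin_cases i
    exacts [⟨1, hslow.1 hfast⟩, ⟨0, hslow.2 hfast⟩]
  obtain ⟨j, hj⟩ := hother
  calc swapInstance.makespan sidestepPlan ≤ 4 := makespan_sidestepPlan_le
    _ < 5 := by norm_num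
    _ ≤ swapInstance.makespan π := hj.trans (swapInstance.arr_le_makespan π j)
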